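/- Let Y be a random variable taking values in an interval [a,b] with a < b and mean μ. Then for all n ∈ ℕ and ε > 0, the probability that the sum of n i.i.d. copies of Y is at most n·μ - n·ε is bounded by exp(-2n·ε²/(b-a)²). -/

import Mathlib

open MeasureTheory ProbabilityTheory

private lemma hoeff_log_le {p : ℝ} (hp0 : 0 ≤ p) (hp1 : p ≤ 1) (h : ℝ) :
    Real.log (1 - p + p * Real.exp h) ≤ h * p + h ^ 2 / 8 := by
  set D : ℝ → ℝ := fun x => 1 - p + p * Real.exp x with hDdef
  have hD : ∀ x, 0 < D x := by
    intro x
    have hDx : D x = 1 - p + p * Real.exp x := rfl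
    rw [hDx]
    rcases hp0.eq_or_lt with rfl | hp
    · norm_num
    · nlinarith [Real.exp_pos x]
  have hD' : ∀ x, HasDerivAt D (p * Real.exp x) x := by
    intro x
    exact ((Real.hasDerivAt_exp x).const_mul p).const_add (1 - p)
  set g : ℝ → ℝ := fun x => p * Real.exp x / D x - p with hgdef
  have hg' : ∀ x, HasDerivAt g (p * Real.exp x * (1 - p) / (D x) ^ 2) x := by
    intro x
    have h1 := (((Real.hasDerivAt_exp x).const_mul p).div (hD' x) (hD x).ne').sub_const p
    refine h1.congr_deriv ?_
    have hDx : D x = 1 - p + p * Real.exp x := rfl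
    have hne : (1 - p + p * Real.exp x) ≠ 0 := by rw [← hDx]; exact (hD x).ne'
    rw [hDx]
    field_simp
    ring
  have hgbound : ∀ x, |g x| ≤ |x| / 4 := by
    intro x
    have key : ∀ y, ‖p * Real.exp y * (1 - p) / (D y) ^ 2‖ ≤ 1/4 := by
      intro y
      have hu : (0:ℝ) ≤ 1 - p := by linarith
      have hv : 0 ≤ p * Real.exp y := mul_nonneg hp0 (Real.exp_pos y).le
      have hnum : 0 ≤ p * Real.exp y * (1 - p) := mul_nonneg hv hu
      rw [Real.norm_eq_abs, abs_of_nonneg (div_nonneg hnum (sq_nonneg _))]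
      rw [div_le_iff₀ (pow_pos (hD y) 2)]
      have hDy : D y = (1 - p) + p * Real.exp y := rfl
      nlinarith [sq_nonneg ((1 - p) - p * Real.exp y)]
    have := Convex.norm_image_sub_le_of_norm_hasDerivWithin_le
      (f := g) (f' := fun y => p * Real.exp y * (1 - p) / (D y) ^ 2) (C := 1/4) (s := Set.univ)
      (fun y _ => (hg' y).hasDerivWithinAt) (fun y _ => key y) convex_univ
      (Set.mem_univ 0) (Set.mem_univ x)
    have hg0 : g 0 = 0 := by
      simp only [hgdef, hDdef, Real.exp_zero, mul_one]
      field_simp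
      ring
    rw [hg0, sub_zero, sub_zero, Real.norm_eq_abs, Real.norm_eq_abs] at this
    linarith
  set f : ℝ → ℝ := fun x => Real.log (D x) - x * p with hfdef
  have hf' : ∀ x, HasDerivAt f (g x) x := by
    intro x
    have h1 := ((hD' x).log (hD x).ne').sub (hasDerivAt_mul_const p)
    exact h1
  set F : ℝ → ℝ := fun x => x ^ 2 / 8 - f x with hFdef
  have hF' : ∀ x, HasDerivAt F (x / 4 - g x) x := by
    intro x
    have h1 := ((hasDerivAt_pow 2 x).div_const 8).sub (hf' x)
    refine h1.congr_deriv ?_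
    ring
  have hF0 : F 0 = 0 := by simp [hFdef, hfdef, hDdef]
  have hFcont : Continuous F := by
    have : Differentiable ℝ F := fun x => (hF' x).differentiableAt
    exact this.continuous
  have hFnonneg : ∀ x, 0 ≤ F x := by
    intro x
    rcases lt_trichotomy x 0 with hx | rfl | hx
    · obtain ⟨c, hc, hceq⟩ := exists_hasDerivAt_eq_slope F (fun y => y / 4 - g y) hx
        (hFcont.continuousOn) (fun y _ => hF' y)
      have hc0 : c < 0 := hc.2
      have hgc := hgbound c
      rw [abs_of_neg hc0] at hgc
      have hgc' : c / 4 ≤ g c := by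
        have := neg_le_of_abs_le hgc
        linarith
      have hle : (F 0 - F x) / (0 - x) ≤ 0 := by rw [← hceq]; linarith
      have hxpos : (0:ℝ) < 0 - x := by linarith
      have hnum : F 0 - F x ≤ 0 := by
        by_contra hcon
        push_neg at hcon
        have := div_pos hcon hxpos
        linarith
      rw [hF0] at hnum
      linarith
    · simpa using hF0.ge
    · obtain ⟨c, hc, hceq⟩ := exists_hasDerivAt_eq_slope F (fun y => y / 4 - g y) hx
        (hFcont.continuousOn) (fun y _ => hF' y)
      have hc0 : 0 < c := hc.1
      have hgc := hgbound c
      rw [abs_of_pos hc0] at hgc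
      have hgc' : g c ≤ c / 4 := le_of_abs_le hgc
      have hge : 0 ≤ (F x - F 0) / (x - 0) := by rw [← hceq]; linarith
      have hxpos : (0:ℝ) < x - 0 := by linarith
      have hnum : 0 ≤ F x - F 0 := by
        by_contra hcon
        push_neg at hcon
        have := div_neg_of_neg_of_pos hcon hxpos
        linarith
      rw [hF0] at hnum
      linarith
  have := hFnonneg h
  have hfh : f h = Real.log (1 - p + p * Real.exp h) - h * p := rfl
  simp only [hFdef] at this
  linarith [this]

private lemma hoeffding_lemma {Ω : Type*} [MeasurableSpace Ω] (μ : Measure Ω) [IsProbabilityMeasure μ]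
    (Y : Ω → ℝ) (hY : Measurable Y) {a b μ₀ : ℝ} (hab : a < b)
    (hbd : ∀ᵐ ω ∂μ, Y ω ∈ Set.Icc a b) (hmean : ∫ ω, Y ω ∂μ = μ₀) (t : ℝ) :
    mgf Y μ t ≤ Real.exp (t * μ₀ + t ^ 2 * (b - a) ^ 2 / 8) := by
  have hba : (0:ℝ) < b - a := by linarith
  have hYabs : ∀ᵐ ω ∂μ, |Y ω| ≤ max |a| |b| := by
    filter_upwards [hbd] with ω hω
    refine abs_le.mpr ⟨?_, ?_⟩
    · calc -(max |a| |b|) ≤ -|a| := neg_le_neg (le_max_left _ _)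
        _ ≤ a := neg_abs_le a
        _ ≤ Y ω := hω.1
    · calc Y ω ≤ b := hω.2
        _ ≤ |b| := le_abs_self b
        _ ≤ max |a| |b| := le_max_right _ _
  have hYint : Integrable Y μ :=
    ⟨hY.aestronglyMeasurable, HasFiniteIntegral.of_bounded (C := max |a| |b|)
      (hYabs.mono fun ω hω => by rwa [Real.norm_eq_abs])⟩
  have hexpint : Integrable (fun ω => Real.exp (t * Y ω)) μ := by
    refine ⟨((hY.const_mul t).exp).aestronglyMeasurable,
      HasFiniteIntegral.of_bounded (C := Real.exp (|t| * max |a| |b|)) ?_⟩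
    filter_upwards [hYabs] with ω hω
    rw [Real.norm_eq_abs, abs_of_pos (Real.exp_pos _), Real.exp_le_exp]
    calc t * Y ω ≤ |t * Y ω| := le_abs_self _
      _ = |t| * |Y ω| := abs_mul t (Y ω)
      _ ≤ |t| * max |a| |b| := mul_le_mul_of_nonneg_left hω (abs_nonneg t)
  have hμ₀a : a ≤ μ₀ := by
    rw [← hmean]
    calc a = ∫ _, a ∂μ := by simp
      _ ≤ ∫ ω, Y ω ∂μ := integral_mono_ae (integrable_const a) hYint
          (hbd.mono fun ω hω => hω.1)
  have hμ₀b : μ₀ ≤ b := by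
    rw [← hmean]
    calc ∫ ω, Y ω ∂μ ≤ ∫ _, b ∂μ := integral_mono_ae hYint (integrable_const b)
          (hbd.mono fun ω hω => hω.2)
      _ = b := by simp
  have hconv : ∀ x, x ∈ Set.Icc a b →
      Real.exp (t * x) ≤ ((b - x) * Real.exp (t * a) + (x - a) * Real.exp (t * b)) / (b - a) := by
    intro x hx
    have hl : (0:ℝ) ≤ (b - x) / (b - a) := div_nonneg (by linarith [hx.2]) hba.le
    have hr : (0:ℝ) ≤ (x - a) / (b - a) := div_nonneg (by linarith [hx.1]) hba.le
    have hsum : (b - x) / (b - a) + (x - a) / (b - a) = 1 := by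
      field_simp
      ring
    have hcx := convexOn_exp.2 (Set.mem_univ (t * a)) (Set.mem_univ (t * b)) hl hr hsum
    have harg : ((b - x) / (b - a)) • (t * a) + ((x - a) / (b - a)) • (t * b) = t * x := by
      simp only [smul_eq_mul]
      field_simp
      ring
    rw [harg] at hcx
    calc Real.exp (t * x) ≤ ((b - x) / (b - a)) • Real.exp (t * a)
          + ((x - a) / (b - a)) • Real.exp (t * b) := hcx
      _ = ((b - x) * Real.exp (t * a) + (x - a) * Real.exp (t * b)) / (b - a) := by
          simp only [smul_eq_mul]
          field_simp
  have i1 : Integrable (fun ω => (b - Y ω) * Real.exp (t * a)) μ :=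
    ((integrable_const b).sub hYint).mul_const _
  have i2 : Integrable (fun ω => (Y ω - a) * Real.exp (t * b)) μ :=
    (hYint.sub (integrable_const a)).mul_const _
  have hstep : mgf Y μ t
      ≤ ((b - μ₀) * Real.exp (t * a) + (μ₀ - a) * Real.exp (t * b)) / (b - a) := by
    calc mgf Y μ t = ∫ ω, Real.exp (t * Y ω) ∂μ := rfl
      _ ≤ ∫ ω, ((b - Y ω) * Real.exp (t * a) + (Y ω - a) * Real.exp (t * b)) / (b - a) ∂μ :=
          integral_mono_ae hexpint ((i1.add i2).div_const _)
            (hbd.mono fun ω hω => hconv _ hω)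
      _ = ((b - μ₀) * Real.exp (t * a) + (μ₀ - a) * Real.exp (t * b)) / (b - a) := by
          rw [integral_div]
          congr 1
          rw [integral_add i1 i2, integral_mul_const, integral_mul_const,
            integral_sub (integrable_const b) hYint, integral_sub hYint (integrable_const a),
            hmean, integral_const, integral_const]
          simp
  set p : ℝ := (μ₀ - a) / (b - a) with hpdef
  set h : ℝ := t * (b - a) with hhdef
  have hp0 : 0 ≤ p := div_nonneg (by linarith) hba.le
  have hp1 : p ≤ 1 := by
    rw [hpdef, div_le_one hba]
    linarith
  have hDpos : 0 < 1 - p + p * Real.exp h := by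
    rcases hp0.eq_or_lt with hpz | hpp
    · rw [← hpz]; norm_num
    · nlinarith [Real.exp_pos h]
  have hEb : Real.exp (t * b) = Real.exp (t * a) * Real.exp h := by
    rw [← Real.exp_add]
    congr 1
    rw [hhdef]; ring
  have heq : ((b - μ₀) * Real.exp (t * a) + (μ₀ - a) * Real.exp (t * b)) / (b - a)
      = Real.exp (t * a) * (1 - p + p * Real.exp h) := by
    rw [hEb, hpdef]
    field_simp
    ring
  refine hstep.trans ?_
  rw [heq]
  calc Real.exp (t * a) * (1 - p + p * Real.exp h)
      = Real.exp (t * a + Real.log (1 - p + p * Real.exp h)) := by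
        rw [Real.exp_add, Real.exp_log hDpos]
    _ ≤ Real.exp (t * a + (h * p + h ^ 2 / 8)) :=
        Real.exp_le_exp.mpr (by linarith [hoeff_log_le hp0 hp1 h])
    _ = Real.exp (t * μ₀ + t ^ 2 * (b - a) ^ 2 / 8) := by
        congr 1
        rw [hhdef, hpdef]
        field_simp
        ring

/-- Hoeffding's inequality, lower tail: if `X i` are i.i.d. random variables taking
values in `[a,b]` with mean `μ₀`, then for all `n` and `ε > 0`,
`P(∑_{i<n} X i ≤ n·μ₀ - n·ε) ≤ exp(-2nε²/(b-a)²)`. -/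
theorem hoeffding_lower_tail {Ω : Type*} [MeasurableSpace Ω]
    (μ : Measure Ω) [IsProbabilityMeasure μ]
    (X : ℕ → Ω → ℝ) (hmeas : ∀ i, Measurable (X i))
    (hindep : iIndepFun X μ)
    (hident : ∀ i, μ.map (X i) = μ.map (X 0))
    (a b μ₀ : ℝ) (hab : a < b)
    (hbound : ∀ i, ∀ᵐ ω ∂μ, X i ω ∈ Set.Icc a b)
    (hmean : ∀ i, ∫ ω, X i ω ∂μ = μ₀)
    (n : ℕ) (ε : ℝ) (hε : 0 < ε) :
    μ {ω | ∑ i ∈ Finset.range n, X i ω ≤ n * μ₀ - n * ε}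
      ≤ ENNReal.ofReal (Real.exp (-2 * n * ε ^ 2 / (b - a) ^ 2)) := by
  have hba : (0:ℝ) < b - a := by linarith
  set t : ℝ := -(4 * ε / (b - a) ^ 2) with htdef
  have ht : t ≤ 0 := by
    rw [htdef]
    have : 0 < 4 * ε / (b - a) ^ 2 := by positivity
    linarith
  -- integrability of exp(t * X i)
  have hexpint : ∀ i, Integrable (fun ω => Real.exp (t * X i ω)) μ := by
    intro i
    refine ⟨(((hmeas i).const_mul t).exp).aestronglyMeasurable,
      HasFiniteIntegral.of_bounded (C := Real.exp (|t| * max |a| |b|)) ?_⟩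
    filter_upwards [hbound i] with ω hω
    rw [Real.norm_eq_abs, abs_of_pos (Real.exp_pos _), Real.exp_le_exp]
    calc t * X i ω ≤ |t * X i ω| := le_abs_self _
      _ = |t| * |X i ω| := abs_mul _ _
      _ ≤ |t| * max |a| |b| := by
          refine mul_le_mul_of_nonneg_left (abs_le.mpr ⟨?_, ?_⟩) (abs_nonneg t)
          · calc -(max |a| |b|) ≤ -|a| := neg_le_neg (le_max_left _ _)
              _ ≤ a := neg_abs_le a
              _ ≤ X i ω := hω.1
          · calc X i ω ≤ b := hω.2
              _ ≤ |b| := le_abs_self b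
              _ ≤ max |a| |b| := le_max_right _ _
  have hSint : Integrable (fun ω => Real.exp (t * (∑ i ∈ Finset.range n, X i) ω)) μ :=
    hindep.integrable_exp_mul_sum hmeas (fun i _ => hexpint i)
  have hchernoff := measure_le_le_exp_mul_mgf (X := ∑ i ∈ Finset.range n, X i)
    (μ := μ) (t := t) (↑n * μ₀ - ↑n * ε) ht hSint
  have hmgfsum : mgf (∑ i ∈ Finset.range n, X i) μ t
      = ∏ i ∈ Finset.range n, mgf (X i) μ t := hindep.mgf_sum hmeas _
  have hmgfle : ∀ i, mgf (X i) μ t ≤ Real.exp (t * μ₀ + t ^ 2 * (b - a) ^ 2 / 8) := fun i =>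
    hoeffding_lemma μ (X i) (hmeas i) hab (hbound i) (hmean i) t
  have hprodle : ∏ i ∈ Finset.range n, mgf (X i) μ t
      ≤ Real.exp (t * μ₀ + t ^ 2 * (b - a) ^ 2 / 8) ^ n := by
    calc ∏ i ∈ Finset.range n, mgf (X i) μ t
        ≤ ∏ _i ∈ Finset.range n, Real.exp (t * μ₀ + t ^ 2 * (b - a) ^ 2 / 8) :=
          Finset.prod_le_prod (fun i _ => mgf_nonneg) (fun i _ => hmgfle i)
      _ = Real.exp (t * μ₀ + t ^ 2 * (b - a) ^ 2 / 8) ^ n := by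
          rw [Finset.prod_const, Finset.card_range]
  have hset : {ω | ∑ i ∈ Finset.range n, X i ω ≤ ↑n * μ₀ - ↑n * ε}
      = {ω | (∑ i ∈ Finset.range n, X i) ω ≤ ↑n * μ₀ - ↑n * ε} := by
    congr with ω
    simp [Finset.sum_apply]
  have hfinal : (μ {ω | ∑ i ∈ Finset.range n, X i ω ≤ ↑n * μ₀ - ↑n * ε}).toReal
      ≤ Real.exp (-2 * n * ε ^ 2 / (b - a) ^ 2) := by
    rw [hset]
    refine hchernoff.trans ?_
    rw [hmgfsum]
    calc Real.exp (-t * (↑n * μ₀ - ↑n * ε)) * ∏ i ∈ Finset.range n, mgf (X i) μ t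
        ≤ Real.exp (-t * (↑n * μ₀ - ↑n * ε))
          * Real.exp (t * μ₀ + t ^ 2 * (b - a) ^ 2 / 8) ^ n :=
          mul_le_mul_of_nonneg_left hprodle (Real.exp_pos _).le
      _ = Real.exp (-t * (↑n * μ₀ - ↑n * ε) + n * (t * μ₀ + t ^ 2 * (b - a) ^ 2 / 8)) := by
          rw [← Real.exp_nat_mul, ← Real.exp_add]
      _ = Real.exp (-2 * n * ε ^ 2 / (b - a) ^ 2) := by
          congr 1
          rw [htdef]
          field_simp
          ring
  calc μ {ω | ∑ i ∈ Finset.range n, X i ω ≤ ↑n * μ₀ - ↑n * ε}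
      = ENNReal.ofReal (μ {ω | ∑ i ∈ Finset.range n, X i ω ≤ ↑n * μ₀ - ↑n * ε}).toReal := by
        rw [ENNReal.ofReal_toReal (measure_ne_top μ _)]
    _ ≤ ENNReal.ofReal (Real.exp (-2 * n * ε ^ 2 / (b - a) ^ 2)) := ENNReal.ofReal_le_ofReal hfinal
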